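/- arXiv:1612.02730 — 10 statements merged into one kernel-verified Lean document; each statement's English description precedes it below -/
import Mathlib

section
/- For positive integers a and b with gcd(a,b)=1, the number of nonnegative integers not representable as ax+by with x,y nonnegative integers equals (a-1)(b-1)/2. -/
/-- Sylvester: the number of nonrepresentable numbers is `(a-1)(b-1)/2`. -/
theorem nonrepresentable_card (a b : ℕ) (ha : 0 < a) (hb : 0 < b)
    (hab : Nat.gcd a b = 1) :
    {n : ℕ | ¬ ∃ x y : ℕ, n = a * x + b * y}.ncard = (a - 1) * (b - 1) / 2 := by
  classical
  by_cases ha1 : a = 1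
  · subst ha1
    have hS : {n : ℕ | ¬ ∃ x y : ℕ, n = 1 * x + b * y} = ∅ := by
      rw [Set.eq_empty_iff_forall_notMem]
      intro n hn
      exact hn ⟨n, 0, by ring⟩
    rw [hS]
    simp
  by_cases hb1 : b = 1
  · subst hb1
    have hS : {n : ℕ | ¬ ∃ x y : ℕ, n = a * x + 1 * y} = ∅ := by
      rw [Set.eq_empty_iff_forall_notMem]
      intro n hn
      exact hn ⟨0, n, by ring⟩
    rw [hS]
    simp
  have ha2 : 1 < a := by omega
  have hb2 : 1 < b := by omega
  have cop : Nat.Coprime a b := hab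
  set N := a * b - a - b with hNdef
  have hN1 : a + b ≤ a * b := Nat.add_le_mul ha2 hb2
  have hF := frobeniusNumber_pair cop ha2 hb2
  -- representability as a predicate
  set P : ℕ → Prop := fun n => ∃ x y : ℕ, n = a * x + b * y with hPdef
  have hrep : ∀ n, P n ↔ n ∈ AddSubmonoid.closure ({a, b} : Set ℕ) := by
    intro n
    rw [AddSubmonoid.mem_closure_pair]
    constructor
    · rintro ⟨x, y, rfl⟩
      exact ⟨x, y, by simp [smul_eq_mul]; ring⟩
    · rintro ⟨x, y, h⟩
      refine ⟨x, y, ?_⟩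
      simp only [smul_eq_mul] at h
      rw [← h]; ring
  have hPN : ¬ P N := by
    rw [hrep]
    exact hF.1
  have hbig : ∀ n, N < n → P n := by
    intro n hn
    by_contra h
    have := hF.2 (by simpa [Set.mem_setOf_eq, ← hrep] using h)
    omega
  have hadd : ∀ m k, P m → P k → P (m + k) := by
    rintro m k ⟨x1, y1, rfl⟩ ⟨x2, y2, rfl⟩
    exact ⟨x1 + x2, y1 + y2, by ring⟩
  -- key construction lemma
  have hkey : ∀ n, n ≤ N → P n ∨ P (N - n) := by
    intro n hn
    haveI : NeZero b := ⟨by omega⟩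
    have hu : IsUnit (a : ZMod b) := (ZMod.isUnit_iff_coprime a b).mpr cop
    set x : ℕ := ((n : ZMod b) * (a : ZMod b)⁻¹).val with hxdef
    have hx : x < b := ZMod.val_lt _
    have hmod : (a * x : ℕ) ≡ n [MOD b] := by
      rw [← ZMod.natCast_eq_natCast_iff]
      push_cast
      rw [hxdef, ZMod.natCast_val, ZMod.cast_id]
      rw [← mul_assoc, mul_comm (a : ZMod b) (n : ZMod b), mul_assoc,
        ZMod.mul_inv_of_unit _ hu, mul_one]
    rcases le_or_gt (a * x) n with hle | hlt
    · left
      obtain ⟨y, hy⟩ := (Nat.modEq_iff_dvd' hle).mp hmod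
      exact ⟨x, y, by rw [← hy, Nat.add_sub_cancel' hle]⟩
    · right
      obtain ⟨t, ht⟩ := (Nat.modEq_iff_dvd' hlt.le).mp hmod.symm
      have ht1 : 1 ≤ t := by
        rcases Nat.eq_zero_or_pos t with rfl | h
        · rw [Nat.mul_zero] at ht; omega
        · exact h
      refine ⟨b - 1 - x, t - 1, ?_⟩
      have h1 : b ≤ a * b - a := by omega
      have h2 : a ≤ a * b := by omega
      have h3 : n ≤ a * b - a - b := hn
      have hx1 : x ≤ b - 1 := by omega
      rw [hNdef]
      zify [h1, h2, h3, hx1, ht1, hlt.le, hb, hN1] at ht ⊢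
      linear_combination ht
  -- finite sets
  set T : Finset ℕ := (Finset.range (N + 1)).filter (fun n => ¬ P n) with hTdef
  set R : Finset ℕ := (Finset.range (N + 1)).filter (fun n => P n) with hRdef
  have hScoe : {n : ℕ | ¬ ∃ x y : ℕ, n = a * x + b * y} = ↑T := by
    ext n
    simp only [hTdef, Finset.coe_filter, Finset.mem_range, Set.mem_setOf_eq]
    constructor
    · intro h
      refine ⟨?_, h⟩
      by_contra hgt
      exact h (hbig n (by omega))
    · exact fun h => h.2
  rw [hScoe, Set.ncard_coe_finset]
  have hcards : R.card + T.card = N + 1 := by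
    rw [hRdef, hTdef, Finset.card_filter_add_card_filter_not]
    exact Finset.card_range (N + 1)
  have hbij : T.card = R.card := by
    apply Finset.card_bij (fun n _ => N - n)
    · intro n hn
      simp only [hTdef, Finset.mem_filter, Finset.mem_range] at hn
      simp only [hRdef, Finset.mem_filter, Finset.mem_range]
      refine ⟨by omega, ?_⟩
      rcases hkey n (by omega) with h | h
      · exact absurd h hn.2
      · exact h
    · intro n hn m hm h
      simp only [hTdef, Finset.mem_filter, Finset.mem_range] at hn hm
      omega
    · intro m hm
      simp only [hRdef, Finset.mem_filter, Finset.mem_range] at hm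
      refine ⟨N - m, ?_, by omega⟩
      simp only [hTdef, Finset.mem_filter, Finset.mem_range]
      refine ⟨by omega, ?_⟩
      intro hP
      apply hPN
      have : N = m + (N - m) := by omega
      rw [this]
      exact hadd _ _ hm.2 hP
  have hNab : N + 1 = (a - 1) * (b - 1) := by
    have h1 : b ≤ a * b - a := by omega
    have h2 : a ≤ a * b := by omega
    rw [hNdef]
    zify [h1, h2, ha, hb, hN1]
    ring
  omega
end

section
/- For positive integers a and b with gcd(a,b)=1, the sum of all nonnegative integers not representable as ax+by with x,y nonnegative integers equals (a-1)(b-1)(2ab-a-b-1)/12. -/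
/-!
Let `0 ≤ t < a` with `b * t ≡ n [MOD a]`. Then `b * t` is the least representable number in the
residue class of `n`, so the gaps in that class are `b * t % a + a * i` for `i < b * t / a`.
Summing these arithmetic progressions and using that `t ↦ b * t % a` permutes `range a` reduces
the sum to the power sums `∑ t` and `∑ t ^ 2` over `range a`.
-/

open Finset

section PowerSums

variable {R : Type*} [CommRing R]

lemma Finset.sum_range_add_mul_mul_two (a r : R) (q : ℕ) :
    (∑ i ∈ range q, (r + a * i)) * 2 * a = (a * q + r) ^ 2 - r ^ 2 - a * (a * q) := by
  induction q with
  | zero => simp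
  | succ q ih => rw [sum_range_succ, add_mul, add_mul, ih]; push_cast; ring

lemma Finset.sum_range_cast_mul_two (n : ℕ) : (∑ i ∈ range n, (i : R)) * 2 = n * (n - 1) := by
  induction n with
  | zero => simp
  | succ n ih => rw [sum_range_succ, add_mul, ih]; push_cast; ring

lemma Finset.sum_range_cast_sq_mul_six (n : ℕ) :
    (∑ i ∈ range n, (i : R) ^ 2) * 6 = n * (n - 1) * (2 * n - 1) := by
  induction n with
  | zero => simp
  | succ n ih => rw [sum_range_succ, add_mul, ih]; push_cast; ring

end PowerSums

namespace Nat

variable {a b : ℕ}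

lemma mul_mod_injOn_range (hab : Coprime a b) : Set.InjOn (fun t => b * t % a) (range a) := by
  intro t ht t' ht' h
  have : t ≡ t' [MOD a] := Nat.ModEq.cancel_left_of_coprime hab h
  simpa [Nat.ModEq, Nat.mod_eq_of_lt (mem_range.1 ht), Nat.mod_eq_of_lt (mem_range.1 ht')] using this

lemma mul_mod_surjOn_range (ha : 0 < a) (hab : Coprime a b) :
    Set.SurjOn (fun t => b * t % a) (range a) (range a) :=
  surjOn_of_injOn_of_card_le _ (fun _ _ => mem_range.2 (Nat.mod_lt _ ha))
    (mul_mod_injOn_range hab) le_rfl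

lemma sum_range_mul_mod {M : Type*} [AddCommMonoid M] (ha : 0 < a) (hab : Coprime a b)
    (f : ℕ → M) : ∑ t ∈ range a, f (b * t % a) = ∑ t ∈ range a, f t :=
  sum_nbij (fun t => b * t % a) (fun _ _ => mem_range.2 (Nat.mod_lt _ ha))
    (mul_mod_injOn_range hab) (mul_mod_surjOn_range ha hab) (fun _ _ => rfl)

lemma not_exists_eq_mul_add_mul_iff (ha : 0 < a) (hab : Coprime a b) (n : ℕ) :
    (¬ ∃ x y, n = a * x + b * y) ↔ ∃ t < a, ∃ i < b * t / a, b * t % a + a * i = n := by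
  constructor
  · intro hn
    obtain ⟨t, ht, hmod : b * t % a = n % a⟩ :=
      mul_mod_surjOn_range ha hab (mem_range.2 (Nat.mod_lt n ha))
    have hlt : n < b * t := by
      by_contra! hle
      obtain ⟨x, hx⟩ := (Nat.modEq_iff_dvd' hle).1 hmod
      exact hn ⟨x, t, by omega⟩
    refine ⟨t, mem_range.1 ht, n / a, ?_, by rw [hmod, Nat.mod_add_div]⟩
    have := Nat.div_add_mod n a
    have := Nat.div_add_mod (b * t) a
    exact Nat.lt_of_mul_lt_mul_left (a := a) (by omega)
  · rintro ⟨t, ht, i, hi, rfl⟩ ⟨x, y, hxy⟩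
    have hmod : b * t ≡ b * y [MOD a] := by
      simpa [Nat.ModEq, Nat.add_mul_mod_self_left] using congrArg (· % a) hxy
    have hty : t ≤ y := by
      have := Nat.ModEq.cancel_left_of_coprime hab hmod
      rw [Nat.ModEq, Nat.mod_eq_of_lt ht] at this
      exact this ▸ Nat.mod_le y a
    have := Nat.div_add_mod (b * t) a
    have := Nat.mul_lt_mul_of_pos_left hi ha
    have := Nat.mul_le_mul_left b hty
    omega

lemma toFinset_setOf_not_exists_eq_mul_add_mul (ha : 0 < a) (hab : Coprime a b)
    (hfin : {n : ℕ | ¬ ∃ x y : ℕ, n = a * x + b * y}.Finite) :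
    hfin.toFinset =
      ((range a).sigma fun t => range (b * t / a)).image fun p => b * p.1 % a + a * p.2 := by
  ext n
  simp [not_exists_eq_mul_add_mul_iff ha hab, and_assoc]

lemma mul_mod_add_mul_injOn (ha : 0 < a) (hab : Coprime a b) :
    Set.InjOn (fun p : (_ : ℕ) × ℕ => b * p.1 % a + a * p.2)
      ((range a).sigma fun t => range (b * t / a)) := by
  rintro ⟨t, i⟩ hti ⟨t', i'⟩ hti' h
  simp only [coe_sigma, Set.mem_sigma_iff, mem_coe] at hti hti' h
  obtain rfl : t = t' := mul_mod_injOn_range hab hti.1 hti'.1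
    (by simpa [Nat.add_mul_mod_self_left] using congrArg (· % a) h)
  obtain rfl : i = i' := Nat.eq_of_mul_eq_mul_left ha (by omega)
  rfl

lemma sum_range_sum_range_mul_mod_add_mul (ha : 0 < a) (hab : Coprime a b) :
    (∑ t ∈ range a, ∑ i ∈ range (b * t / a), ((b * t % a + a * i : ℕ) : ℚ)) * (2 * a)
      = ((b : ℚ) ^ 2 - 1) * ∑ t ∈ range a, (t : ℚ) ^ 2 - a * (b - 1) * ∑ t ∈ range a, (t : ℚ) := by
  have hinner (t : ℕ) : (∑ i ∈ range (b * t / a), ((b * t % a + a * i : ℕ) : ℚ)) * (2 * a)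
      = (b * t) ^ 2 - ((b * t % a : ℕ) : ℚ) ^ 2 - a * (b * t - (b * t % a : ℕ)) := by
    have hdiv : (a : ℚ) * (b * t / a : ℕ) + (b * t % a : ℕ) = b * t := by
      exact_mod_cast Nat.div_add_mod (b * t) a
    push_cast [← mul_assoc, sum_range_add_mul_mul_two]
    rw [hdiv]
    linear_combination -(a : ℚ) * hdiv
  have hsq := sum_range_mul_mod ha hab fun r => (r : ℚ) ^ 2
  have hid := sum_range_mul_mod ha hab fun r => (r : ℚ)
  rw [sum_mul, sum_congr rfl fun t _ => hinner t]
  simp only [sum_sub_distrib, ← mul_sum, mul_sub, mul_pow, hsq, hid]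
  ring

end Nat

theorem nonrepresentable_sum_general (a b : ℕ) (ha : 0 < a)
    (hab : Nat.gcd a b = 1)
    (hfin : {n : ℕ | ¬ ∃ x y : ℕ, n = a * x + b * y}.Finite) :
    (∑ n ∈ hfin.toFinset, (n : ℚ))
      = ((a : ℚ) - 1) * ((b : ℚ) - 1) * (2 * a * b - a - b - 1) / 12 := by
  have hgaps := Nat.sum_range_sum_range_mul_mod_add_mul ha hab
  have hid := sum_range_cast_mul_two (R := ℚ) a
  have hsq := sum_range_cast_sq_mul_six (R := ℚ) a
  rw [Nat.toFinset_setOf_not_exists_eq_mul_add_mul ha hab hfin,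
    sum_image (Nat.mul_mod_add_mul_injOn ha hab), sum_sigma]
  dsimp only
  rw [eq_div_of_mul_eq (by positivity) hgaps, eq_div_of_mul_eq two_ne_zero hid,
    eq_div_of_mul_eq (by norm_num) hsq]
  field_simp
  ring

/-- The sum of the nonrepresentable numbers is `(a-1)(b-1)(2ab-a-b-1)/12`. -/
theorem nonrepresentable_sum (a b : ℕ) (ha : 0 < a) (hb : 0 < b)
    (hab : Nat.gcd a b = 1)
    (hfin : {n : ℕ | ¬ ∃ x y : ℕ, n = a * x + b * y}.Finite) :
    (∑ n ∈ hfin.toFinset, (n : ℚ))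
      = ((a : ℚ) - 1) * ((b : ℚ) - 1) * (2 * a * b - a - b - 1) / 12 :=
  nonrepresentable_sum_general a b ha hab hfin
end

section
/- Let n,d be integers with 2 ≤ n < d and gcd(n,d) = 1, and let q ≥ 2 be an integer. Set 2g - 2 = nd - n - d - 1, and assume g ≥ 2. Then the number of pairs (i,j) of integers with i ≥ 0, 0 ≤ j < n, and ni + dj ≤ (2g-2)q equals (2q-1)(g-1). -/
lemma gauss_int (n : ℤ) (hn : 0 ≤ n) :
    2 * ∑ j ∈ Finset.Ico (0:ℤ) n, j = n * (n - 1) := by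
  refine Int.le_induction (motive := fun m _ => 2 * ∑ j ∈ Finset.Ico (0:ℤ) m, j = m * (m-1)) (by simp) (fun k hk ih => ?_) n hn
  · skip
    have h : Finset.Ico (0:ℤ) (k+1) = insert k (Finset.Ico (0:ℤ) k) := by
      ext x; simp only [Finset.mem_Ico, Finset.mem_insert]; omega
    rw [h, Finset.sum_insert (by simp)]
    ring_nf; ring_nf at ih; linarith

/-- For coprime `n, d` with `2 ≤ n < d`, `q ≥ 2`, `2g-2 = nd-n-d-1`, `g ≥ 2`,
the number of integer pairs `(i,j)` with `i ≥ 0`, `0 ≤ j < n`,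
`ni + dj ≤ (2g-2)q` equals `(2q-1)(g-1)`. -/
theorem card_basis_coprime (n d q g : ℤ) (hn : 2 ≤ n) (hnd : n < d)
    (hcop : Int.gcd n d = 1) (hq : 2 ≤ q) (hg : 2 * g - 2 = n * d - n - d - 1)
    (hg2 : 2 ≤ g) :
    (({p : ℤ × ℤ | 0 ≤ p.1 ∧ 0 ≤ p.2 ∧ p.2 < n ∧
        n * p.1 + d * p.2 ≤ (2 * g - 2) * q}.ncard : ℤ)) = (2 * q - 1) * (g - 1) := by
  have hn0 : (0:ℤ) < n := by linarith
  set M : ℤ := (2*g-2)*q with hM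
  set T : Finset (ℤ×ℤ) := (Finset.Ico (0:ℤ) n).biUnion
      (fun j => (Finset.Icc (0:ℤ) ((M - d*j)/n)).image (fun i => (i, j))) with hT
  have hset : {p : ℤ × ℤ | 0 ≤ p.1 ∧ 0 ≤ p.2 ∧ p.2 < n ∧
        n * p.1 + d * p.2 ≤ M} = ↑T := by
    ext ⟨i, j⟩
    constructor
    · rintro ⟨hi, hj, hjn, hle⟩
      refine Finset.mem_coe.mpr (Finset.mem_biUnion.mpr ⟨j, Finset.mem_Ico.mpr ⟨hj, hjn⟩,
        Finset.mem_image.mpr ⟨i, Finset.mem_Icc.mpr ⟨hi, ?_⟩, rfl⟩⟩)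
      rw [Int.le_ediv_iff_mul_le hn0]; linarith
    · intro hp
      obtain ⟨j', hj', hmem⟩ := Finset.mem_biUnion.mp (Finset.mem_coe.mp hp)
      obtain ⟨i', hi', heq⟩ := Finset.mem_image.mp hmem
      obtain ⟨rfl, rfl⟩ := Prod.mk.inj heq
      rw [Finset.mem_Ico] at hj'
      obtain ⟨hi1, hi2⟩ := Finset.mem_Icc.mp hi'
      rw [Int.le_ediv_iff_mul_le hn0] at hi2
      exact ⟨hi1, hj'.1, hj'.2, by linarith⟩
  rw [show {p : ℤ × ℤ | 0 ≤ p.1 ∧ 0 ≤ p.2 ∧ p.2 < n ∧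
        n * p.1 + d * p.2 ≤ (2*g-2)*q} = ↑T from hset, Set.ncard_coe_finset]
  have hcard : T.card = ∑ j ∈ Finset.Ico (0:ℤ) n, ((M - d*j)/n + 1).toNat := by
    rw [hT, Finset.card_biUnion]
    · refine Finset.sum_congr rfl fun j _ => ?_
      rw [Finset.card_image_of_injective _ (fun a b h => (Prod.mk.inj h).1),
        Int.card_Icc]
      congr 1; ring
    · intro a _ b _ hab
      simp only [Finset.disjoint_left, Finset.mem_image]
      rintro p ⟨i1, _, rfl⟩ ⟨i2, _, h2⟩
      exact hab (Prod.mk.inj h2).2.symm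
  have hnonneg : ∀ j ∈ Finset.Ico (0:ℤ) n, 0 ≤ (M - d*j)/n + 1 := by
    intro j hj
    rw [Finset.mem_Ico] at hj
    have h1 : -n ≤ M - d*j := by nlinarith [hj.1, hj.2]
    have h2 : (-1 : ℤ) ≤ (M - d*j)/n := by
      rw [Int.le_ediv_iff_mul_le hn0]; linarith
    linarith
  have hcast : (T.card : ℤ) = ∑ j ∈ Finset.Ico (0:ℤ) n, ((M - d*j)/n + 1) := by
    rw [hcard, Nat.cast_sum]
    exact Finset.sum_congr rfl fun j hj => Int.toNat_of_nonneg (hnonneg j hj)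
  rw [hcast]
  set G : ℤ := ∑ j ∈ Finset.Ico (0:ℤ) n, j with hGdef
  have hcardIco : ((Finset.Ico (0:ℤ) n).card : ℤ) = n := by
    rw [Int.card_Ico]; omega
  have hres : ∑ j ∈ Finset.Ico (0:ℤ) n, (M - d*j) % n = G := by
    have hinj : ∀ a ∈ Finset.Ico (0:ℤ) n, ∀ b ∈ Finset.Ico (0:ℤ) n,
        (M - d*a) % n = (M - d*b) % n → a = b := by
      intro a ha b hb hab
      rw [Finset.mem_Ico] at ha hb
      rw [Int.emod_eq_emod_iff_emod_sub_eq_zero] at hab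
      have hdvd : n ∣ d * (b - a) := by
        have h0 := Int.dvd_of_emod_eq_zero hab
        have he : (M - d*a) - (M - d*b) = d * (b - a) := by ring
        rwa [he] at h0
      have hcop' : IsCoprime n d := Int.isCoprime_iff_gcd_eq_one.mpr hcop
      obtain ⟨c, hc⟩ := hcop'.dvd_of_dvd_mul_left hdvd
      rcases lt_trichotomy c 0 with h | h | h
      · nlinarith [ha.1, ha.2, hb.1, hb.2]
      · rw [h, mul_zero] at hc; omega
      · nlinarith [ha.1, ha.2, hb.1, hb.2]
    have himg : (Finset.Ico (0:ℤ) n).image (fun j => (M - d*j) % n)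
        = Finset.Ico (0:ℤ) n := by
      apply Finset.eq_of_subset_of_card_le
      · intro x hx
        rw [Finset.mem_image] at hx
        obtain ⟨j, _, rfl⟩ := hx
        rw [Finset.mem_Ico]
        exact ⟨Int.emod_nonneg _ (ne_of_gt hn0), Int.emod_lt_of_pos _ hn0⟩
      · rw [Finset.card_image_of_injOn hinj]
    rw [hGdef]
    conv_rhs => rw [← himg]
    exact (Finset.sum_image (f := fun x => x) hinj).symm
  set Q : ℤ := ∑ j ∈ Finset.Ico (0:ℤ) n, (M - d*j)/n with hQdef
  have hsum1 : ∑ j ∈ Finset.Ico (0:ℤ) n, (M - d*j) = n * M - d * G := by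
    rw [Finset.sum_sub_distrib, Finset.sum_const, nsmul_eq_mul, hcardIco,
      ← Finset.mul_sum, ← hGdef]
  have hQ : n * Q = n * M - d * G - G := by
    rw [hQdef, Finset.mul_sum]
    have hc : ∀ j ∈ Finset.Ico (0:ℤ) n, n * ((M - d*j)/n) = (M - d*j) - (M - d*j) % n := by
      intro j _
      have h0 := Int.mul_ediv_add_emod (M - d*j) n
      linarith
    rw [Finset.sum_congr rfl hc, Finset.sum_sub_distrib, hsum1, hres]
  have hG : 2 * G = n * (n - 1) := gauss_int n (by linarith)
  have hsum : ∑ j ∈ Finset.Ico (0:ℤ) n, ((M - d*j)/n + 1) = Q + n := by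
    rw [Finset.sum_add_distrib, ← hQdef, Finset.sum_const, nsmul_eq_mul,
      mul_one, hcardIco]
  rw [hsum]
  have key : (2*n) * (Q + n) = (2*n) * ((2*q-1)*(g-1)) := by
    linear_combination 2*hQ - (d+1)*hG + 2*n*hM + n*hg
  have h2n : (2*n : ℤ) ≠ 0 := by positivity
  exact mul_left_cancel₀ h2n key
end

section
/- Let n,d be integers with 2 ≤ n < d, G = gcd(n,d), q ≥ 2 an integer, and 2g - 2 = nd - n - d - G with g ≥ 2. Then the cardinality of S = {(i,j) ∈ ℤ² : i ≥ 0, 0 ≤ j < n, ni + dj ≤ (2g-2)q} equals (2q-1)(g-1). -/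
/-!
Row `j` (for `0 ≤ j < n`) of the region contains `⌊(M - dj)/n⌋ + 1` points, where `M = (2g-2)q`.
This needs `⌊(M - dj)/n⌋ ≥ -1`, i.e. `M ≥ nd - n - d = 2g - 2 + gcd(n,d)`, which holds for `q ≥ 2`
because `gcd(n,d)` divides `2g - 2 > 0`. As `gcd(n,d) ∣ M`, the residues `(M - dj) mod n` run
`gcd(n,d)` times through the multiples of `gcd(n,d)` below `n`, which evaluates the floor sum;
the total is `M - (g - 1)`.
-/

open Finset

namespace Int

theorem two_mul_sum_Ico_zero_id {n : ℤ} (hn : 0 ≤ n) :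
    2 * ∑ j ∈ Ico 0 n, j = n * (n - 1) := by
  induction n, hn using Int.leInduction with
  | base => simp
  | succ m hm ih =>
    rw [← insert_Ico_right_eq_Ico_add_one hm, sum_insert right_notMem_Ico, mul_add, ih]
    ring

theorem sum_Ico_zero_natCast_mul_of_periodic {M : Type*} [AddCommMonoid M] {f : ℤ → M} {p : ℤ}
    (hf : Function.Periodic f p) (hp : 0 ≤ p) (k : ℕ) :
    ∑ j ∈ Ico 0 (k * p), f j = k • ∑ j ∈ Ico 0 p, f j := by
  induction k with
  | zero => simp
  | succ k ih =>
    have hkp : 0 ≤ (k : ℤ) * p := by positivity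
    have hshift : ∑ j ∈ Ico ((k : ℤ) * p) (k * p + p), f j = ∑ j ∈ Ico 0 p, f j := by
      simpa [add_comm] using
        (sum_Ico_add' f 0 p ((k : ℤ) * p)).symm.trans (sum_congr rfl fun x _ => hf.nat_mul k x)
    rw [Nat.cast_succ, add_one_mul, ← Ico_union_Ico_eq_Ico hkp (by linarith),
      sum_union (Ico_disjoint_Ico_consecutive _ _ _), ih, hshift, succ_nsmul]

theorem sum_Ico_zero_emod_of_gcd_eq_one {n b : ℤ} (a : ℤ) (hn : 0 < n) (hb : n.gcd b = 1) :
    ∑ j ∈ Ico 0 n, (a + b * j) % n = ∑ j ∈ Ico 0 n, j := by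
  have hmaps : Set.MapsTo (fun j => (a + b * j) % n) (Ico 0 n) (Ico 0 n) := fun j _ => by
    simp [emod_nonneg _ hn.ne', emod_lt_of_pos _ hn]
  have hinj : Set.InjOn (fun j => (a + b * j) % n) (Ico 0 n) := fun x hx y hy hxy => by
    simp only [coe_Ico, Set.mem_Ico] at hx hy
    have hmod : x ≡ y [ZMOD n] := by
      simpa [hb] using (ModEq.add_left_cancel' a hxy).cancel_left_div_gcd hn
    rwa [ModEq, emod_eq_of_lt hx.1 hx.2, emod_eq_of_lt hy.1 hy.2] at hmod
  exact sum_nbij _ hmaps hinj (surjOn_of_injOn_of_card_le _ hmaps hinj le_rfl) fun _ _ => rfl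

theorem two_mul_sum_Ico_zero_emod {n b a : ℤ} (hn : 0 < n) (ha : (n.gcd b : ℤ) ∣ a) :
    2 * ∑ j ∈ Ico 0 n, (a + b * j) % n = n * (n - n.gcd b) := by
  obtain ⟨G, n₁, b₁, hG, hcop, rfl, rfl⟩ := exists_gcd_one' (gcd_pos_of_ne_zero_left b hn.ne')
  have hG' : (0 : ℤ) < G := by exact_mod_cast hG
  have hn₁ : 0 < n₁ := pos_of_mul_pos_left hn hG'.le
  rw [gcd_mul_right, hcop, natAbs_natCast, one_mul] at ha ⊢
  obtain ⟨a₁, rfl⟩ := ha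
  have hscale : ∀ j, (G * a₁ + b₁ * G * j) % (n₁ * G) = G * ((a₁ + b₁ * j) % n₁) := fun j => by
    rw [← mul_emod_mul_of_pos _ _ hG']
    ring_nf
  have hperiodic : Function.Periodic (fun j => (a₁ + b₁ * j) % n₁) n₁ := fun j => by
    dsimp only
    rw [mul_add, ← add_assoc, mul_comm b₁ n₁, add_mul_emod_self_left]
  rw [sum_congr rfl fun j _ => hscale j, ← mul_sum, mul_comm n₁,
    sum_Ico_zero_natCast_mul_of_periodic hperiodic hn₁.le, sum_Ico_zero_emod_of_gcd_eq_one _ hn₁ hcop,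
    nsmul_eq_mul]
  linear_combination (G : ℤ) * G * two_mul_sum_Ico_zero_id hn₁.le

theorem two_mul_sum_Ico_zero_ediv {n b a : ℤ} (hn : 0 < n) (ha : (n.gcd b : ℤ) ∣ a) :
    2 * ∑ j ∈ Ico 0 n, (a + b * j) / n = 2 * a + b * (n - 1) - (n - n.gcd b) := by
  have hsum : n * ∑ j ∈ Ico 0 n, (a + b * j) / n =
      n * a + b * ∑ j ∈ Ico 0 n, j - ∑ j ∈ Ico 0 n, (a + b * j) % n := by
    rw [mul_sum, sum_congr rfl fun j _ => eq_sub_of_add_eq (mul_ediv_add_emod (a + b * j) n),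
      sum_sub_distrib, sum_add_distrib, sum_const, card_Ico, sub_zero, nsmul_eq_mul,
      toNat_of_nonneg hn.le, mul_sum]
  apply mul_left_cancel₀ hn.ne'
  linear_combination 2 * hsum + b * two_mul_sum_Ico_zero_id hn.le - two_mul_sum_Ico_zero_emod hn ha

end Int

theorem ncard_strip_lattice_points {n : ℤ} (d M : ℤ) (hn : 0 < n) :
    {p : ℤ × ℤ | 0 ≤ p.1 ∧ 0 ≤ p.2 ∧ p.2 < n ∧ n * p.1 + d * p.2 ≤ M}.ncard =
      ∑ j ∈ Ico 0 n, ((M - d * j) / n + 1).toNat := by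
  have hrows : {p : ℤ × ℤ | 0 ≤ p.1 ∧ 0 ≤ p.2 ∧ p.2 < n ∧ n * p.1 + d * p.2 ≤ M} =
      ↑((Ico 0 n).biUnion fun j => Icc 0 ((M - d * j) / n) ×ˢ {j}) := by
    ext ⟨i, j⟩
    simp only [Set.mem_ofPred_eq, coe_biUnion, coe_Ico, Set.mem_Ico, Set.mem_iUnion, mem_coe,
      mem_product, mem_Icc, mem_singleton, Int.le_ediv_iff_mul_le hn, exists_prop]
    constructor
    · rintro ⟨hi, hj, hjn, hle⟩
      exact ⟨j, ⟨hj, hjn⟩, ⟨hi, by linarith⟩, rfl⟩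
    · rintro ⟨j, ⟨hj, hjn⟩, ⟨hi, hle⟩, rfl⟩
      exact ⟨hi, hj, hjn, by linarith⟩
  have hdisj : (↑(Ico 0 n) : Set ℤ).PairwiseDisjoint fun j => Icc 0 ((M - d * j) / n) ×ˢ {j} :=
    fun j _ j' _ hjj' => disjoint_product.2 (Or.inr (disjoint_singleton.2 hjj'))
  rw [hrows, Set.ncard_coe_finset, card_biUnion hdisj]
  simp [Int.card_Icc]

theorem neg_one_le_sub_mul_ediv {n d M j : ℤ} (hn : 0 < n) (hd : 0 ≤ d)
    (hM : n * d - n - d ≤ M) (hj : j < n) : -1 ≤ (M - d * j) / n := by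
  have hdj : d * j ≤ d * (n - 1) := mul_le_mul_of_nonneg_left (by omega) hd
  rw [Int.le_ediv_iff_mul_le hn]
  linarith

theorem card_basis_general_general (n d q g : ℤ) (hn : 2 ≤ n) (hq : 2 ≤ q)
    (hg : 2 * (g - 1) = n * d - n - d - (Int.gcd n d : ℤ)) (hg2 : 2 ≤ g) :
    (({p : ℤ × ℤ | 0 ≤ p.1 ∧ 0 ≤ p.2 ∧ p.2 < n ∧
        n * p.1 + d * p.2 ≤ (2 * g - 2) * q}.ncard : ℤ)) = (2 * q - 1) * (g - 1) := by
  set G : ℤ := (Int.gcd n d : ℤ)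
  set M : ℤ := (2 * g - 2) * q
  have hn0 : 0 < n := by omega
  have hG_dvd : G ∣ 2 * (g - 1) := by
    rw [hg]
    have hGn : G ∣ n := Int.gcd_dvd_left n d
    exact (((hGn.mul_right d).sub hGn).sub (Int.gcd_dvd_right n d)).sub dvd_rfl
  have hG_le : G ≤ 2 * (g - 1) := Int.le_of_dvd (by omega) hG_dvd
  have hd : 0 ≤ d := by nlinarith [Int.natCast_nonneg (Int.gcd n d)]
  have hM : n * d - n - d ≤ M := by nlinarith
  have hGM : G ∣ M := by
    rw [show M = 2 * (g - 1) * q by ring]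
    exact hG_dvd.mul_right q
  have hrow (j : ℤ) (hj : j ∈ Ico 0 n) : 0 ≤ (M - d * j) / n + 1 := by
    linarith [neg_one_le_sub_mul_ediv hn0 hd hM (mem_Ico.1 hj).2]
  have hfloor := Int.two_mul_sum_Ico_zero_ediv (a := M) (b := -d) hn0 (by rwa [Int.gcd_neg])
  simp only [neg_mul, ← sub_eq_add_neg, Int.gcd_neg] at hfloor
  rw [ncard_strip_lattice_points d M hn0, Nat.cast_sum,
    sum_congr rfl fun j hj => Int.toNat_of_nonneg (hrow j hj), sum_add_distrib, sum_const,
    Int.card_Ico, sub_zero, nsmul_eq_mul, mul_one, Int.toNat_of_nonneg hn0.le]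
  linarith

/-- For `2 ≤ n < d`, `G = gcd(n,d)`, `q ≥ 2`, `2(g-1) = nd-n-d-G`, `g ≥ 2`,
the number of integer pairs `(i,j)` with `i ≥ 0`, `0 ≤ j < n`,
`ni + dj ≤ (2g-2)q` equals `(2q-1)(g-1)`. -/
theorem card_basis_general (n d q g : ℤ) (hn : 2 ≤ n) (hnd : n < d) (hq : 2 ≤ q)
    (hg : 2 * (g - 1) = n * d - n - d - (Int.gcd n d : ℤ)) (hg2 : 2 ≤ g) :
    (({p : ℤ × ℤ | 0 ≤ p.1 ∧ 0 ≤ p.2 ∧ p.2 < n ∧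
        n * p.1 + d * p.2 ≤ (2 * g - 2) * q}.ncard : ℤ)) = (2 * q - 1) * (g - 1) :=
  card_basis_general_general n d q g hn hq hg hg2
end

section
/- Let n,d be integers with 2 ≤ n < d and G = gcd(n,d). Set 2g - 2 = nd - n - d - G with g ≥ 2. Then the number of pairs (i,j) ∈ ℤ² with i ≥ 0, 0 ≤ j < n, and ni + dj ≤ 2g - 2 equals g. -/
/-!
Count the points column by column: with `C = 2g - 2`, column `j` holds `⌊(C - dj)/n⌋ + 1`
points, a nonnegative number for `j ≤ n - 2`, while for `j = n - 1` this expression is `-1`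
and the column is empty. Since `G ∣ C`, the residues `(C - dj) mod n`, `0 ≤ j < n`, run `G`
times through the multiples of `G` below `n`, so they add up to `n(n - G)/2`; hence the
floors add up to `(2C - d(n - 1) - (n - G))/2`, the `n` expressions `⌊(C - dj)/n⌋ + 1` add up
to `g - 1`, and the empty column contributes `0` instead of `-1`.
-/

open Finset

theorem Function.Periodic.sum_range_mul {M : Type*} [AddCommMonoid M] {f : ℕ → M} {p : ℕ}
    (hf : Function.Periodic f p) (k : ℕ) :
    ∑ j ∈ range (k * p), f j = k • ∑ j ∈ range p, f j := by
  induction k with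
  | zero => simp
  | succ k ih =>
    rw [Nat.succ_mul, sum_range_add, ih, succ_nsmul]
    congr 1
    exact sum_congr rfl fun r _ => by rw [add_comm]; exact hf.nat_mul k r

theorem two_mul_sum_range_natCast (N : ℕ) : 2 * ∑ j ∈ range N, (j : ℤ) = N * (N - 1) := by
  induction N with
  | zero => simp
  | succ N ih => rw [sum_range_succ, mul_add, ih]; push_cast; ring

theorem sum_range_emod_sub_mul_of_isCoprime {N : ℕ} {d : ℤ} (hN : 0 < N)
    (hd : IsCoprime (N : ℤ) d) (c : ℤ) :
    ∑ j ∈ range N, (c - d * j) % N = ∑ k ∈ range N, (k : ℤ) := by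
  have hN' : (0 : ℤ) < N := by exact_mod_cast hN
  set r : ℕ → ℕ := fun j => ((c - d * j) % N).toNat
  have hr : ∀ j, (r j : ℤ) = (c - d * j) % N := fun j =>
    Int.toNat_of_nonneg (Int.emod_nonneg _ hN'.ne')
  have hmaps : ∀ j ∈ range N, r j ∈ range N := by
    intro j _
    rw [mem_range, ← Nat.cast_lt (α := ℤ), hr]
    exact Int.emod_lt_of_pos _ hN'
  have hinj : Set.InjOn r (range N) := by
    intro a ha b hb hab
    have hmod : c - d * a ≡ c - d * b [ZMOD N] := by
      rw [Int.ModEq, ← hr, ← hr, hab]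
    have hdvd : (N : ℤ) ∣ a - b := hd.dvd_of_dvd_mul_left <| by
      simpa [mul_sub] using hmod.dvd
    have := Int.eq_zero_of_abs_lt_dvd hdvd (by
      rw [coe_range, Set.mem_Iio] at ha hb
      rw [abs_lt]; omega)
    omega
  exact sum_nbij r hmaps hinj (surjOn_of_injOn_of_card_le r hmaps hinj le_rfl)
    fun j _ => (hr j).symm

theorem two_mul_sum_range_emod_sub_mul {n : ℕ} {d C : ℤ} (hn : 0 < n)
    (hC : (Int.gcd n d : ℤ) ∣ C) :
    2 * ∑ j ∈ range n, (C - d * j) % n = n * (n - Int.gcd n d) := by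
  have hG : 0 < Int.gcd n d := Int.gcd_pos_of_ne_zero_left _ (by exact_mod_cast hn.ne')
  obtain ⟨n', d', hcop, hn', hd'⟩ := Int.exists_gcd_one hG
  generalize Int.gcd n d = G at *
  obtain ⟨c, rfl⟩ := hC
  lift n' to ℕ using by nlinarith
  have hG' : (0 : ℤ) < G := by exact_mod_cast hG
  have hnG : n = n' * G := by exact_mod_cast hn'
  have hscale : ∀ j : ℕ, (G * c - d * j) % n = G * ((c - d' * j) % n') := by
    intro j
    rw [hn', hd', ← Int.mul_emod_mul_of_pos _ _ hG']
    ring_nf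
  have hper : Function.Periodic (fun j : ℕ => (G * c - d * j) % n) n' := by
    intro j
    have : G * c - d * ↑(j + n') = G * c - d * j + (-d') * n := by
      rw [hn', hd']; push_cast; ring
    simp only [this, Int.add_mul_emod_self_right]
  have hsum := sum_range_emod_sub_mul_of_isCoprime (Nat.pos_of_mul_pos_right (hnG ▸ hn))
    (Int.isCoprime_iff_gcd_eq_one.mpr hcop) c
  have hsplit := hper.sum_range_mul G
  rw [mul_comm, ← hnG] at hsplit
  rw [hsplit, nsmul_eq_mul]
  simp only [hscale, ← mul_sum, hsum]
  rw [hn']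
  linear_combination (G : ℤ) * G * two_mul_sum_range_natCast n'

theorem two_mul_sum_range_ediv_sub_mul {n : ℕ} {d C : ℤ} (hn : 0 < n)
    (hC : (Int.gcd n d : ℤ) ∣ C) :
    2 * ∑ j ∈ range n, (C - d * j) / n = 2 * C - d * (n - 1) - (n - Int.gcd n d) := by
  have hdivmod : n * ∑ j ∈ range n, (C - d * j) / n + ∑ j ∈ range n, (C - d * j) % n
      = n * C - d * ∑ j ∈ range n, (j : ℤ) := by
    calc _ = ∑ j ∈ range n, (C - d * j) := by
          rw [mul_sum, ← sum_add_distrib]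
          exact sum_congr rfl fun j _ => Int.mul_ediv_add_emod _ _
      _ = _ := by rw [sum_sub_distrib, sum_const, card_range, nsmul_eq_mul, mul_sum]
  have hpos : (n : ℤ) ≠ 0 := by exact_mod_cast hn.ne'
  apply mul_left_cancel₀ hpos
  linear_combination 2 * hdivmod - two_mul_sum_range_emod_sub_mul hn hC
    - d * two_mul_sum_range_natCast n

theorem ncard_lattice_points_eq_sum {n : ℕ} (hn : 0 < n) (d C : ℤ) :
    {p : ℤ × ℤ | 0 ≤ p.1 ∧ 0 ≤ p.2 ∧ p.2 < n ∧ n * p.1 + d * p.2 ≤ C}.ncard =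
      ∑ j ∈ range n, ((C - d * j) / n + 1).toNat := by
  have hset : {p : ℤ × ℤ | 0 ≤ p.1 ∧ 0 ≤ p.2 ∧ p.2 < n ∧ n * p.1 + d * p.2 ≤ C} =
      ↑((range n).biUnion fun j => Icc 0 ((C - d * j) / n) ×ˢ {(j : ℤ)}) := by
    ext ⟨i, j⟩
    simp only [Set.mem_ofPred_eq, coe_biUnion, coe_range, Set.mem_iUnion, Set.mem_Iio,
      coe_product, coe_Icc, coe_singleton, Set.mem_prod, Set.mem_Icc, Set.mem_singleton_iff,
      Int.le_ediv_iff_mul_le (Int.natCast_pos.mpr hn)]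
    constructor
    · rintro ⟨hi, hj, hjn, hle⟩
      lift j to ℕ using hj
      exact ⟨j, by exact_mod_cast hjn, ⟨hi, by linarith⟩, rfl⟩
    · rintro ⟨j, hjn, ⟨hi, hle⟩, rfl⟩
      exact ⟨hi, j.cast_nonneg, by exact_mod_cast hjn, by linarith⟩
  rw [hset, Set.ncard_coe_finset, card_biUnion]
  · simp
  · intro a _ b _ hab
    rw [Function.onFun, disjoint_product]
    exact .inr (by simpa using hab)

theorem sum_range_succ_toNat_of_eq_neg_one {f : ℕ → ℤ} {m : ℕ} (hf : ∀ j < m, 0 ≤ f j)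
    (hm : f m = -1) :
    ∑ j ∈ range (m + 1), ((f j).toNat : ℤ) = ∑ j ∈ range (m + 1), f j + 1 := by
  rw [sum_range_succ, sum_range_succ, hm,
    sum_congr rfl fun j hj => Int.toNat_of_nonneg (hf j (mem_range.mp hj))]
  norm_num

theorem card_basis_q_one_general (n d g : ℤ) (hn : 2 ≤ n) (hnd : n < d)
    (hg : 2 * (g - 1) = n * d - n - d - (Int.gcd n d : ℤ)) :
    (({p : ℤ × ℤ | 0 ≤ p.1 ∧ 0 ≤ p.2 ∧ p.2 < n ∧
        n * p.1 + d * p.2 ≤ 2 * g - 2}.ncard : ℤ)) = g := by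
  lift n to ℕ using by omega
  have hGn : (Int.gcd n d : ℤ) ≤ n := Int.le_of_dvd (by omega) (Int.gcd_dvd_left ..)
  have hGd : (Int.gcd n d : ℤ) ≤ d - n :=
    Int.le_of_dvd (by omega) (dvd_sub (Int.gcd_dvd_right ..) (Int.gcd_dvd_left ..))
  have hGC : (Int.gcd n d : ℤ) ∣ 2 * g - 2 := by
    rw [← mul_sub_one, hg]
    exact dvd_sub (dvd_sub (dvd_sub (dvd_mul_of_dvd_left (Int.gcd_dvd_left ..) _)
      (Int.gcd_dvd_left ..)) (Int.gcd_dvd_right ..)) dvd_rfl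
  have hG : 0 < (Int.gcd n d : ℤ) := by
    exact_mod_cast Int.gcd_pos_of_ne_zero_left _ (by omega)
  have hfloor := two_mul_sum_range_ediv_sub_mul (by omega) hGC
  rw [ncard_lattice_points_eq_sum (by omega)]
  generalize Int.gcd n d = G at *
  obtain ⟨m, rfl⟩ : ∃ m, n = m + 1 := ⟨n - 1, by omega⟩
  push_cast at *
  have hlast : (2 * g - 2 - d * m) / (m + 1) = -2 := by
    have hm : (0 : ℤ) < m + 1 := by positivity
    refine le_antisymm ?_ ?_
    · exact Int.lt_add_one_iff.mp ((Int.ediv_lt_iff_lt_mul hm).mpr (by linarith))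
    · exact (Int.le_ediv_iff_mul_le hm).mpr (by linarith)
  have hcol : ∀ j < m, 0 ≤ (2 * g - 2 - d * j) / (m + 1) + 1 := by
    intro j hj
    have hjm : (j : ℤ) + 1 ≤ m := by exact_mod_cast hj
    have hnum : 0 ≤ 2 * g - 2 - d * j := by nlinarith
    have := Int.ediv_nonneg hnum (by positivity : (0 : ℤ) ≤ m + 1)
    omega
  rw [sum_range_succ_toNat_of_eq_neg_one hcol (by rw [hlast]; rfl), sum_add_distrib, sum_const,
    card_range, nsmul_one]
  push_cast
  linarith

/-- `q = 1` case: the number of integer pairs `(i,j)` with `i ≥ 0`, `0 ≤ j < n`,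
`ni + dj ≤ 2g-2` equals `g`, where `2(g-1) = nd-n-d-gcd(n,d)` and `g ≥ 2`. -/
theorem card_basis_q_one (n d g : ℤ) (hn : 2 ≤ n) (hnd : n < d)
    (hg : 2 * (g - 1) = n * d - n - d - (Int.gcd n d : ℤ)) (hg2 : 2 ≤ g) :
    (({p : ℤ × ℤ | 0 ≤ p.1 ∧ 0 ≤ p.2 ∧ p.2 < n ∧
        n * p.1 + d * p.2 ≤ 2 * g - 2}.ncard : ℤ)) = g :=
  card_basis_q_one_general n d g hn hnd hg
end

section
/- Let n,d,q be positive integers with 2 ≤ n < d, q ≥ 2, G = gcd(n,d), and 2g-2 = nd-n-d-G with g ≥ 2. Then ∑_{(i,j)∈S} (ni+dj) = 2(g-1)²q² + (g-1)Gq + (G² - 1 - (n-1)(d-1)(2nd-n-d-1))/12, where S = {(i,j) ∈ ℤ² : i ≥ 0, 0 ≤ j < n, ni+dj ≤ (2g-2)q}. -/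
/-! Cut the region into the columns `j ∈ [0, n)`: column `j` is `0 ≤ i ≤ ⌊(M - d j)/n⌋` with
`M = (2g-2)q`, and its sum is `((M - r_j)(M - r_j + n) + n d j - d² j²)/(2n)` where
`r_j = (M - d j) mod n`. Since `G ∣ M` and `d/G` is a unit mod `n/G`, the residues `r_j` run
exactly `G` times through the multiples of `G` in `[0, n)`, so the total reduces to the power
sums `∑ k` and `∑ k²`. -/

open Finset

namespace Int

theorem six_mul_sum_Ico_quadratic (A B C : ℤ) {m : ℤ} (hm : 0 ≤ m) :
    6 * ∑ k ∈ Ico 0 m, (A * k ^ 2 + B * k + C)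
      = A * (m - 1) * m * (2 * m - 1) + 3 * B * (m - 1) * m + 6 * C * m := by
  induction m, hm using Int.leInduction with
  | base => simp
  | succ m hm ih =>
    rw [← insert_Ico_right_eq_Ico_add_one hm, sum_insert (by simp)]
    linear_combination ih

theorem sum_Ico_mul_of_periodic {f : ℤ → ℤ} {a : ℤ} (hf : Function.Periodic f a) (ha : 0 ≤ a)
    {t : ℤ} (ht : 0 ≤ t) : ∑ j ∈ Ico 0 (t * a), f j = t * ∑ j ∈ Ico 0 a, f j := by
  induction t, ht using Int.leInduction with
  | base => simp
  | succ t ht ih =>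
    have hshift := sum_Ico_add' f 0 a (t * a)
    rw [zero_add, add_comm a] at hshift
    rw [add_one_mul, ← Ico_union_Ico_eq_Ico (mul_nonneg ht ha) (by omega),
      sum_union (Ico_disjoint_Ico_consecutive _ _ _), ih, ← hshift]
    simp only [(by simpa using hf.int_mul t : Function.Periodic f (t * a)) _]
    ring

theorem sum_Ico_emod_sub_mul {a b : ℤ} (hab : IsCoprime a b) (ha : 0 < a) (c : ℤ) (f : ℤ → ℤ) :
    ∑ j ∈ Ico 0 a, f ((c - b * j) % a) = ∑ k ∈ Ico 0 a, f k := by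
  have hinj : Set.InjOn (fun j => (c - b * j) % a) (Ico 0 a) := by
    intro j hj j' hj' h
    simp only [coe_Ico, Set.mem_Ico] at hj hj'
    have hdvd : a ∣ j - j' :=
      hab.dvd_of_dvd_mul_left (by simpa [mul_sub] using Int.modEq_iff_dvd.mp h)
    have := (Int.modEq_iff_dvd.mpr hdvd).symm
    rwa [Int.ModEq, Int.emod_eq_of_lt hj'.1 hj'.2, Int.emod_eq_of_lt hj.1 hj.2] at this
  have himage : (Ico 0 a).image (fun j => (c - b * j) % a) = Ico 0 a := by
    refine eq_of_subset_of_card_le (fun k hk => ?_) (card_image_of_injOn hinj).ge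
    obtain ⟨j, -, rfl⟩ := mem_image.mp hk
    exact mem_Ico.mpr ⟨Int.emod_nonneg _ ha.ne', Int.emod_lt_of_pos _ ha⟩
  rw [← sum_image hinj, himage]

theorem sum_Ico_emod_sub_mul_of_gcd_dvd {n : ℤ} (hn : 0 < n) (d : ℤ) {M : ℤ}
    (hM : (n.gcd d : ℤ) ∣ M) (f : ℤ → ℤ) :
    ∑ j ∈ Ico 0 n, f ((M - d * j) % n) = n.gcd d * ∑ k ∈ Ico 0 (n / n.gcd d), f (n.gcd d * k) := by
  have hcop := Int.isCoprime_iff_gcd_eq_one.mpr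
    (Int.gcd_div_gcd_div_gcd (Int.gcd_pos_of_ne_zero_left d hn.ne'))
  have hG : (0 : ℤ) < n.gcd d := mod_cast Int.gcd_pos_of_ne_zero_left d hn.ne'
  set G : ℤ := (Int.gcd n d : ℤ)
  obtain ⟨a, hna⟩ : G ∣ n := Int.gcd_dvd_left n d
  obtain ⟨b, hdb⟩ : G ∣ d := Int.gcd_dvd_right n d
  obtain ⟨c, rfl⟩ := hM
  have ha : 0 < a := pos_of_mul_pos_right (hna ▸ hn) hG.le
  have hper : Function.Periodic (fun j => f (G * ((c - b * j) % a))) a := fun j => by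
    simp only [mul_add, ← sub_sub, Int.sub_mul_emod_self_right]
  rw [hna, hdb, Int.mul_ediv_cancel_left _ hG.ne', Int.mul_ediv_cancel_left _ hG.ne'] at hcop
  calc ∑ j ∈ Ico 0 n, f ((G * c - d * j) % n)
      = ∑ j ∈ Ico 0 (G * a), f (G * ((c - b * j) % a)) := by
        rw [hna, hdb]
        refine sum_congr rfl fun j _ => ?_
        rw [← Int.mul_emod_mul_of_pos _ _ hG, mul_sub, mul_assoc]
    _ = G * ∑ j ∈ Ico 0 a, f (G * ((c - b * j) % a)) := sum_Ico_mul_of_periodic hper ha.le hG.le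
    _ = G * ∑ k ∈ Ico 0 (n / G), f (G * k) := by
        rw [sum_Ico_emod_sub_mul hcop ha c (fun k => f (G * k)), hna,
          Int.mul_ediv_cancel_left _ hG.ne']

theorem sum_filter_le_eq_sum_Icc_ediv {n d M : ℤ} (hn : 0 < n) (hd : 0 ≤ d) :
    ∑ p ∈ (Icc 0 M ×ˢ Ico 0 n).filter (fun p => n * p.1 + d * p.2 ≤ M), (n * p.1 + d * p.2)
      = ∑ j ∈ Ico 0 n, ∑ i ∈ Icc 0 ((M - d * j) / n), (n * i + d * j) := by
  rw [sum_filter, sum_product_right]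
  refine sum_congr rfl fun j hj => ?_
  rw [← sum_filter]
  congr 1
  ext i
  simp only [mem_filter, mem_Icc, mem_Ico, Int.le_ediv_iff_mul_le hn] at hj ⊢
  constructor
  · rintro ⟨⟨hi, -⟩, hle⟩
    exact ⟨hi, by linarith⟩
  · rintro ⟨hi, hle⟩
    exact ⟨⟨hi, by nlinarith⟩, by linarith⟩

-- For `M - c < -n` the interval is empty but the right-hand side need not vanish.
theorem two_mul_mul_sum_Icc_ediv {n : ℤ} (hn : 0 < n) {c M : ℤ} (h : -n ≤ M - c) :
    2 * n * ∑ i ∈ Icc 0 ((M - c) / n), (n * i + c)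
      = (M - (M - c) % n) * (M - (M - c) % n + n) + n * c - c ^ 2 := by
  have hm : 0 ≤ (M - c) / n + 1 := by
    have := (Int.le_ediv_iff_mul_le hn).mpr (by linarith : -1 * n ≤ M - c)
    omega
  have hsum := six_mul_sum_Ico_quadratic 0 n c hm
  have hdiv := Int.mul_ediv_add_emod (M - c) n
  simp only [zero_mul, zero_add] at hsum
  rw [← Ico_add_one_right_eq_Icc]
  apply mul_left_cancel₀ (three_ne_zero : (3 : ℤ) ≠ 0)
  linear_combination n * hsum + 3 * (n * ((M - c) / n) + M + c - (M - c) % n + n) * hdiv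

theorem six_mul_sum_Ico_residue_quadratic {n : ℤ} (hn : 0 < n) (d : ℤ) {M : ℤ}
    (hG : (n.gcd d : ℤ) ∣ M) :
    6 * ∑ j ∈ Ico 0 n, (M - (M - d * j) % n) * (M - (M - d * j) % n + n)
      = n * (6 * M ^ 2 + 6 * n.gcd d * M + (n.gcd d) ^ 2 - n ^ 2) := by
  rw [sum_Ico_emod_sub_mul_of_gcd_dvd hn d hG (fun r => (M - r) * (M - r + n))]
  have hG0 : (0 : ℤ) < n.gcd d := mod_cast Int.gcd_pos_of_ne_zero_left d hn.ne'
  set G : ℤ := (Int.gcd n d : ℤ)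
  obtain ⟨a, hna⟩ : G ∣ n := Int.gcd_dvd_left n d
  have ha : 0 < a := pos_of_mul_pos_right (hna ▸ hn) hG0.le
  rw [show n / G = a by rw [hna, Int.mul_ediv_cancel_left _ hG0.ne'],
    sum_congr rfl fun k _ => show (M - G * k) * (M - G * k + n)
      = G ^ 2 * k ^ 2 + -((2 * M + n) * G) * k + M * (M + n) by ring]
  have hquad := six_mul_sum_Ico_quadratic (G ^ 2) (-((2 * M + n) * G)) (M * (M + n)) ha.le
  rw [← mul_assoc, mul_comm 6 G, mul_assoc, hquad, hna]
  ring

theorem six_mul_sum_Ico_mul_sub_sq (n d : ℤ) (hn : 0 ≤ n) :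
    6 * ∑ j ∈ Ico 0 n, (n * d * j - d ^ 2 * j ^ 2) = n * ((n - 1) * d * (3 * n - (2 * n - 1) * d)) := by
  rw [sum_congr rfl fun j _ => show n * d * j - d ^ 2 * j ^ 2 = -d ^ 2 * j ^ 2 + n * d * j + 0 by ring]
  linear_combination six_mul_sum_Ico_quadratic (-d ^ 2) (n * d) 0 hn

theorem twelve_mul_sum_filter_le {n d M : ℤ} (hn : 0 < n) (hd : 0 ≤ d) (hM : d * (n - 1) - n ≤ M)
    (hG : (n.gcd d : ℤ) ∣ M) :
    12 * ∑ p ∈ (Icc 0 M ×ˢ Ico 0 n).filter (fun p => n * p.1 + d * p.2 ≤ M), (n * p.1 + d * p.2)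
      = 6 * M ^ 2 + 6 * n.gcd d * M + (n.gcd d) ^ 2 - n ^ 2
        + (n - 1) * d * (3 * n - (2 * n - 1) * d) := by
  have hcolumns : 2 * n * ∑ j ∈ Ico 0 n, ∑ i ∈ Icc 0 ((M - d * j) / n), (n * i + d * j)
      = ∑ j ∈ Ico 0 n, (M - (M - d * j) % n) * (M - (M - d * j) % n + n)
        + ∑ j ∈ Ico 0 n, (n * d * j - d ^ 2 * j ^ 2) := by
    rw [mul_sum, ← sum_add_distrib]
    refine sum_congr rfl fun j hj => ?_
    have hdj : d * j ≤ d * (n - 1) := mul_le_mul_of_nonneg_left (by simp at hj; omega) hd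
    rw [two_mul_mul_sum_Icc_ediv hn (by linarith)]
    ring
  rw [sum_filter_le_eq_sum_Icc_ediv hn hd]
  apply mul_left_cancel₀ hn.ne'
  linear_combination 6 * hcolumns + six_mul_sum_Ico_residue_quadratic hn d hG
    + six_mul_sum_Ico_mul_sub_sq n d hn.le

end Int

theorem W1_general_general (n d q g : ℤ) (hn : 2 ≤ n) (hq : 2 ≤ q)
    (hg : 2 * (g - 1) = n * d - n - d - (Int.gcd n d : ℤ)) (hg2 : 2 ≤ g) :
    ((∑ p ∈ ((Finset.Icc (0 : ℤ) ((2 * g - 2) * q)) ×ˢ (Finset.Ico (0 : ℤ) n)).filter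
        (fun p => n * p.1 + d * p.2 ≤ (2 * g - 2) * q), (n * p.1 + d * p.2) : ℤ) : ℚ)
      = 2 * ((g : ℚ) - 1) ^ 2 * (q : ℚ) ^ 2
        + ((g : ℚ) - 1) * (Int.gcd n d : ℚ) * (q : ℚ)
        + ((Int.gcd n d : ℚ) ^ 2 - 1
            - ((n : ℚ) - 1) * ((d : ℚ) - 1) * (2 * n * d - n - d - 1)) / 12 := by
  have hG_dvd : (n.gcd d : ℤ) ∣ 2 * g - 2 := by
    obtain ⟨a, ha⟩ := Int.gcd_dvd_left n d
    obtain ⟨b, hb⟩ := Int.gcd_dvd_right n d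
    exact ⟨a * d - a - b - 1, by linear_combination hg + (d - 1) * ha - hb⟩
  have hG_le : (n.gcd d : ℤ) ≤ 2 * g - 2 := Int.le_of_dvd (by omega) hG_dvd
  have hd : 0 ≤ d := by nlinarith
  -- This is where `q ≥ 2` enters: for `q = 1` the column `j = n - 1` has `⌊(M - d j)/n⌋ < -1`.
  have hM : d * (n - 1) - n ≤ (2 * g - 2) * q := by nlinarith
  have h12 := congrArg (Int.cast : ℤ → ℚ)
    (Int.twelve_mul_sum_filter_le (by omega) hd hM (hG_dvd.mul_right q))
  push_cast at h12 ⊢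
  linear_combination h12 / 12

/-- (Proposition 4.2.) For `2 ≤ n < d`, `G = gcd(n,d)`, `q ≥ 2`,
`2(g-1) = nd-n-d-G`, `g ≥ 2`, the sum of `ni + dj` over pairs `(i,j)` with
`i ≥ 0`, `0 ≤ j < n`, `ni + dj ≤ (2g-2)q` equals
`2(g-1)²q² + (g-1)Gq + (G² - 1 - (n-1)(d-1)(2nd-n-d-1))/12`. -/
theorem W1_general (n d q g : ℤ) (hn : 2 ≤ n) (hnd : n < d) (hq : 2 ≤ q)
    (hg : 2 * (g - 1) = n * d - n - d - (Int.gcd n d : ℤ)) (hg2 : 2 ≤ g) :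
    ((∑ p ∈ ((Finset.Icc (0 : ℤ) ((2 * g - 2) * q)) ×ˢ (Finset.Ico (0 : ℤ) n)).filter
        (fun p => n * p.1 + d * p.2 ≤ (2 * g - 2) * q), (n * p.1 + d * p.2) : ℤ) : ℚ)
      = 2 * ((g : ℚ) - 1) ^ 2 * (q : ℚ) ^ 2
        + ((g : ℚ) - 1) * (Int.gcd n d : ℚ) * (q : ℚ)
        + ((Int.gcd n d : ℚ) ^ 2 - 1
            - ((n : ℚ) - 1) * ((d : ℚ) - 1) * (2 * n * d - n - d - 1)) / 12 :=
  W1_general_general n d q g hn hq hg hg2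
end

section
/- Let n,d,q be positive integers with 2 ≤ n < d, q ≥ 2, G = gcd(n,d), and 2g-2 = nd-n-d-G with g ≥ 2, and assume (n,d,q) ∉ {(2,5,2),(2,6,2)}. Then (d-1)·∑_{(i,j)∈S} j = (d-1)[(n-1)((g-1)q + (-2nd+3n+d)/6) - ∑_{j=0}^{n-1} frac((-(d+G)q - dj)/n)·j], where S = {(i,j) ∈ ℤ² : i ≥ 0, 0 ≤ j < n, ni+dj ≤ (2g-2)q} and frac denotes fractional part. -/
/-!
Count the points of `S` column by column: column `j` holds `⌊((2g-2)q - dj)/n⌋ + 1` points as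
long as `(2g-2)q - dj ≥ -n`, which holds for every `j < n` because `G` divides
`2g - 2 = nd - n - d - G` and hence `G ≤ 2g - 2`. Writing the floor as the quotient minus a
fractional part, and using `(2g-2)q ≡ -(d+G)q (mod n)`, the count becomes a combination of
`∑ j` and `∑ j²` plus the fractional-part sum.
-/

open Finset

section PowerSums

variable {R : Type*} [CommRing R]

lemma sum_Ico_zero_intCast_mul_two (n : ℤ) (hn : 0 ≤ n) :
    (∑ j ∈ Ico 0 n, (j : R)) * 2 = n * (n - 1) := by
  induction n, hn using Int.leInduction with
  | base => simp
  | succ m hm ih =>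
    rw [← insert_Ico_right_eq_Ico_add_one hm, sum_insert right_notMem_Ico, add_mul, ih]
    push_cast
    ring

lemma sum_Ico_zero_intCast_sq_mul_six (n : ℤ) (hn : 0 ≤ n) :
    (∑ j ∈ Ico 0 n, (j : R) ^ 2) * 6 = n * (n - 1) * (2 * n - 1) := by
  induction n, hn using Int.leInduction with
  | base => simp
  | succ m hm ih =>
    rw [← insert_Ico_right_eq_Ico_add_one hm, sum_insert right_notMem_Ico, add_mul, ih]
    push_cast
    ring

end PowerSums

lemma sum_Ico_zero_div_add_one_mul {K : Type*} [Field K] [CharZero K] {n : ℤ} (hn : 0 < n)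
    (N d : K) :
    ∑ j ∈ Ico 0 n, ((N - d * j) / n + 1) * j
      = (n - 1) * (N / 2 + (-2 * n * d + 3 * n + d) / 6) := by
  have hn' : (n : K) ≠ 0 := by exact_mod_cast hn.ne'
  have hsplit : ∑ j ∈ Ico 0 n, ((N - d * j) / n + 1) * j
      = (N / n + 1) * ∑ j ∈ Ico 0 n, (j : K) - d / n * ∑ j ∈ Ico 0 n, (j : K) ^ 2 := by
    rw [mul_sum, mul_sum, ← sum_sub_distrib]
    exact sum_congr rfl fun j _ => by ring
  rw [hsplit, eq_div_of_mul_eq two_ne_zero (sum_Ico_zero_intCast_mul_two (R := K) n hn.le),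
    eq_div_of_mul_eq (by norm_num) (sum_Ico_zero_intCast_sq_mul_six (R := K) n hn.le)]
  field_simp
  ring

section FloorRing

variable {K : Type*} [Field K] [LinearOrder K] [IsStrictOrderedRing K] [FloorRing K]

lemma intCast_ediv_eq_sub_fract (a : ℤ) {b : ℤ} (hb : 0 ≤ b) :
    ((a / b : ℤ) : K) = a / b - Int.fract ((a : K) / b) := by
  rw [Int.fract, Int.floor_div_cast_of_nonneg hb, Int.floor_intCast]
  ring

lemma fract_intCast_div_eq_of_modEq {a b n : ℤ} (h : a ≡ b [ZMOD n]) :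
    Int.fract ((a : K) / n) = Int.fract ((b : K) / n) := by
  obtain ⟨k, hk⟩ := Int.modEq_iff_dvd.mp h
  rcases eq_or_ne (n : K) 0 with hn | hn
  · simp [hn]
  refine Int.fract_eq_fract.mpr ⟨-k, ?_⟩
  have hk' : (b : K) - a = n * k := by exact_mod_cast hk
  push_cast
  field_simp
  linear_combination -hk'

end FloorRing

lemma card_filter_Icc_mul_le {n r B : ℤ} (hn : 0 < n) (hr : -n ≤ r) (hrB : r ≤ B) :
    (#((Icc 0 B).filter (fun i => n * i ≤ r)) : ℤ) = r / n + 1 := by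
  have hfilter : (Icc 0 B).filter (fun i => n * i ≤ r) = Icc 0 (r / n) := by
    ext i
    simp only [mem_filter, mem_Icc, Int.le_ediv_iff_mul_le hn]
    constructor
    · rintro ⟨⟨hi, -⟩, hir⟩
      exact ⟨hi, by linarith⟩
    · rintro ⟨hi, hir⟩
      exact ⟨⟨hi, by nlinarith⟩, by linarith⟩
  have hquot : -1 ≤ r / n := (Int.le_ediv_iff_mul_le hn).mpr (by linarith)
  rw [hfilter, Int.card_Icc, Int.toNat_of_nonneg (by omega)]
  ring

lemma sum_snd_filter_Icc_product {n d N m : ℤ} (hn : 0 < n)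
    (hcol : ∀ j ∈ Ico 0 m, 0 ≤ d * j ∧ d * j ≤ N + n) :
    ∑ p ∈ (Icc 0 N ×ˢ Ico 0 m).filter (fun p => n * p.1 + d * p.2 ≤ N), p.2
      = ∑ j ∈ Ico 0 m, ((N - d * j) / n + 1) * j := by
  rw [sum_filter, sum_product_right]
  refine sum_congr rfl fun j hj => ?_
  obtain ⟨hdj0, hdjN⟩ := hcol j hj
  have hcount := card_filter_Icc_mul_le hn (r := N - d * j) (B := N) (by linarith) (by linarith)
  rw [← sum_filter, sum_const, nsmul_eq_mul, ← hcount]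
  congr 3
  ext i
  simp only [mem_filter]
  constructor <;> rintro ⟨hi, h⟩ <;> exact ⟨hi, by linarith⟩

lemma gcd_le_of_pos {n d : ℤ} (h : 0 < n * d - n - d - Int.gcd n d) :
    (Int.gcd n d : ℤ) ≤ n * d - n - d - Int.gcd n d := by
  refine Int.le_of_dvd h ?_
  have hn : (Int.gcd n d : ℤ) ∣ n := Int.gcd_dvd_left n d
  have hd : (Int.gcd n d : ℤ) ∣ d := Int.gcd_dvd_right n d
  exact (((hn.mul_right d).sub hn).sub hd).sub dvd_rfl

theorem W2_formula_general (n d q g : ℤ) (hn : 2 ≤ n) (hnd : n < d) (hq : 2 ≤ q)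
    (hg : 2 * (g - 1) = n * d - n - d - (Int.gcd n d : ℤ)) (hg2 : 2 ≤ g) :
    ((d : ℚ) - 1) *
      ((∑ p ∈ ((Finset.Icc (0 : ℤ) ((2 * g - 2) * q)) ×ˢ (Finset.Ico (0 : ℤ) n)).filter
        (fun p => n * p.1 + d * p.2 ≤ (2 * g - 2) * q), p.2 : ℤ) : ℚ)
      = ((d : ℚ) - 1) *
          (((n : ℚ) - 1) * (((g : ℚ) - 1) * (q : ℚ)
              + (-2 * (n : ℚ) * (d : ℚ) + 3 * (n : ℚ) + (d : ℚ)) / 6)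
            - ∑ j ∈ Finset.Ico (0 : ℤ) n,
                Int.fract ((((-(d + (Int.gcd n d : ℤ)) * q - d * j : ℤ)) : ℚ) / (n : ℚ))
                  * (j : ℚ)) := by
  have hgcd : (Int.gcd n d : ℤ) ≤ 2 * (g - 1) := hg ▸ gcd_le_of_pos (by omega)
  -- `d * (n - 1) = (2g - 2) + n + G ≤ 2 * (2g - 2) + n`
  have hcol : ∀ j ∈ Ico 0 n, 0 ≤ d * j ∧ d * j ≤ (2 * g - 2) * q + n := by
    intro j hj
    obtain ⟨hj0, hjn⟩ := mem_Ico.mp hj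
    constructor <;> nlinarith
  have hfract (j : ℤ) : Int.fract ((((2 * g - 2) * q - d * j : ℤ) : ℚ) / n)
      = Int.fract ((((-(d + (Int.gcd n d : ℤ)) * q - d * j : ℤ)) : ℚ) / n) :=
    fract_intCast_div_eq_of_modEq <|
      Int.modEq_iff_dvd.mpr ⟨(1 - d) * q, by linear_combination -q * hg⟩
  have hterm : ∀ j ∈ Ico 0 n, (((((2 * g - 2) * q - d * j) / n + 1) * j : ℤ) : ℚ)
      = ((((2 * g - 2) * q : ℤ) - d * j) / n + 1) * j
        - Int.fract ((((-(d + (Int.gcd n d : ℤ)) * q - d * j : ℤ)) : ℚ) / n) * j := by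
    intro j _
    rw [Int.cast_mul, Int.cast_add, intCast_ediv_eq_sub_fract _ (by omega), hfract]
    push_cast
    ring
  rw [sum_snd_filter_Icc_product (by omega) hcol, Int.cast_sum, sum_congr rfl hterm,
    sum_sub_distrib, sum_Ico_zero_div_add_one_mul (by omega)]
  push_cast
  ring

/-- (Proposition 4.4.) For `2 ≤ n < d`, `G = gcd(n,d)`, `q ≥ 2`,
`2(g-1) = nd-n-d-G`, `g ≥ 2`, with `(n,d,q)` neither `(2,5,2)` nor `(2,6,2)`:
`(d-1)·∑_{(i,j)∈S} j = (d-1)[(n-1)((g-1)q + (-2nd+3n+d)/6)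
  - ∑_{j=0}^{n-1} frac((-(d+G)q - dj)/n)·j]`. -/
theorem W2_formula (n d q g : ℤ) (hn : 2 ≤ n) (hnd : n < d) (hq : 2 ≤ q)
    (hg : 2 * (g - 1) = n * d - n - d - (Int.gcd n d : ℤ)) (hg2 : 2 ≤ g)
    (h1 : ¬(n = 2 ∧ d = 5 ∧ q = 2)) (h2 : ¬(n = 2 ∧ d = 6 ∧ q = 2)) :
    ((d : ℚ) - 1) *
      ((∑ p ∈ ((Finset.Icc (0 : ℤ) ((2 * g - 2) * q)) ×ˢ (Finset.Ico (0 : ℤ) n)).filter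
        (fun p => n * p.1 + d * p.2 ≤ (2 * g - 2) * q), p.2 : ℤ) : ℚ)
      = ((d : ℚ) - 1) *
          (((n : ℚ) - 1) * (((g : ℚ) - 1) * (q : ℚ)
              + (-2 * (n : ℚ) * (d : ℚ) + 3 * (n : ℚ) + (d : ℚ)) / 6)
            - ∑ j ∈ Finset.Ico (0 : ℤ) n,
                Int.fract ((((-(d + (Int.gcd n d : ℤ)) * q - d * j : ℤ)) : ℚ) / (n : ℚ))
                  * (j : ℚ)) :=
  W2_formula_general n d q g hn hnd hq hg hg2
end

section
/- Let n,d be coprime integers with 2 ≤ n < d, d ≡ -1 (mod n), and g = (n-1)(d-1)/2 ≥ 2. Then for every integer q ≥ 2, the quantity w = g(n+1)(d-7)/12 + g + (d-1)·∑_{j=0}^{n-1} frac(-((d+1)q + dj)/n)·j equals (n²-1)(d²-1)/24. -/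
/-! Since `d ≡ -1 (mod n)`, the numerator `-((d+1)q + dj)` is `≡ j (mod n)`, so for `0 ≤ j < n`
its fractional part over `n` is `j / n`, independently of `q`. The sum is then
`∑ j² / n = (n-1)(2n-1)/6`, and the claim becomes a polynomial identity once `2g = (n-1)(d-1)`. -/

theorem Int.fract_intCast_div_of_modEq {K : Type*} [Field K] [LinearOrder K] [IsStrictOrderedRing K]
    [FloorRing K] {m j n : ℤ} (hj : 0 ≤ j) (hjn : j < n) (h : m ≡ j [ZMOD n]) :
    Int.fract ((m : K) / n) = j / n := by
  lift n to ℕ using hj.trans hjn.le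
  rw [Int.cast_natCast, Int.fract_div_intCast_eq_div_intCast_mod, h, Int.emod_eq_of_lt hj hjn]

theorem Int.ModEq.neg_add_mul_modEq_of_modEq_neg_one {n d : ℤ} (hd : d ≡ -1 [ZMOD n]) (q j : ℤ) :
    -((d + 1) * q + d * j) ≡ j [ZMOD n] := by
  simpa using (((hd.add_right 1).mul_right q).add (hd.mul_right j)).neg

theorem Finset.sum_Ico_zero_sq_mul_six {R : Type*} [CommRing R] {n : ℤ} (hn : 0 ≤ n) :
    (∑ j ∈ Finset.Ico 0 n, (j : R) ^ 2) * 6 = n * (n - 1) * (2 * n - 1) := by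
  lift n to ℕ using hn
  induction n with
  | zero => simp
  | succ k ih =>
    rw [Nat.cast_succ, ← Finset.insert_Ico_right_eq_Ico_add_one (by omega),
      Finset.sum_insert (by simp), add_mul, ih]
    push_cast
    ring

theorem weight_d_equiv_neg_one_general (n d q g : ℤ) (hn : 2 ≤ n)
    (hmod : d ≡ -1 [ZMOD n])
    (hg : 2 * g = (n - 1) * (d - 1)) :
    (g : ℚ) * ((n : ℚ) + 1) * ((d : ℚ) - 7) / 12 + (g : ℚ)
      + ((d : ℚ) - 1) * ∑ j ∈ Finset.Ico (0 : ℤ) n,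
          Int.fract (((-((d + 1) * q + d * j) : ℤ) : ℚ) / (n : ℚ)) * (j : ℚ)
      = ((n : ℚ) ^ 2 - 1) * ((d : ℚ) ^ 2 - 1) / 24 := by
  have hterm : ∀ j ∈ Finset.Ico 0 n,
      Int.fract (((-((d + 1) * q + d * j) : ℤ) : ℚ) / n) * j = (j : ℚ) ^ 2 / n := by
    intro j hj
    rw [Finset.mem_Ico] at hj
    rw [Int.fract_intCast_div_of_modEq hj.1 hj.2 (hmod.neg_add_mul_modEq_of_modEq_neg_one q j)]
    ring
  rw [Finset.sum_congr rfl hterm, ← Finset.sum_div]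
  have hsq := Finset.sum_Ico_zero_sq_mul_six (R := ℚ) (by omega : 0 ≤ n)
  have hsum : (∑ j ∈ Finset.Ico 0 n, (j : ℚ) ^ 2) / n = (n - 1) * (2 * n - 1) / 6 := by
    have hn0 : (n : ℚ) ≠ 0 := by exact_mod_cast (by omega : n ≠ 0)
    rw [div_eq_iff hn0]
    linear_combination hsq / 6
  have hgq : 2 * (g : ℚ) = (n - 1) * (d - 1) := by exact_mod_cast hg
  rw [hsum]
  linear_combination (((n : ℚ) + 1) * (d - 7) + 12) / 24 * hgq

/-- For coprime `n, d` with `2 ≤ n < d`, `d ≡ -1 (mod n)`, `g = (n-1)(d-1)/2 ≥ 2`,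
and any `q ≥ 2`, the `q`-weight formula
`g(n+1)(d-7)/12 + g + (d-1)·∑_{j=0}^{n-1} frac(-((d+1)q+dj)/n)·j`
equals `(n²-1)(d²-1)/24`. -/
theorem weight_d_equiv_neg_one (n d q g : ℤ) (hn : 2 ≤ n) (hnd : n < d)
    (hcop : Int.gcd n d = 1) (hmod : d ≡ -1 [ZMOD n]) (hq : 2 ≤ q)
    (hg : 2 * g = (n - 1) * (d - 1)) (hg2 : 2 ≤ g) :
    (g : ℚ) * ((n : ℚ) + 1) * ((d : ℚ) - 7) / 12 + (g : ℚ)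
      + ((d : ℚ) - 1) * ∑ j ∈ Finset.Ico (0 : ℤ) n,
          Int.fract (((-((d + 1) * q + d * j) : ℤ) : ℚ) / (n : ℚ)) * (j : ℚ)
      = ((n : ℚ) ^ 2 - 1) * ((d : ℚ) ^ 2 - 1) / 24 :=
  weight_d_equiv_neg_one_general n d q g hn hmod hg
end

section
/- Let n,d be integers with 2 ≤ n < d, G = gcd(n,d), and d ≡ -G (mod n). Let n' = n/G. Then ∑_{j=0}^{n-1} frac(Gj/n)·j = (n-G)(3n+n'-2)/12, where frac denotes fractional part. -/
/-!
Since `n = G n'`, we have `frac(G j / n) = frac(j / n')`, so the range `0 ≤ j < n` splits into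
`G` blocks of length `n'`, and on the `q`-th block `j = q n' + r` contributes `(q n' + r) r / n'`.
Each block therefore adds `q ∑ r + (∑ r²) / n'` over `0 ≤ r < n'`, and the classical formulas
for these two sums give the closed form.
-/

open Finset

theorem sum_Ico_zero_natCast {M : Type*} [AddCommMonoid M] (N : ℕ) (f : ℤ → M) :
    ∑ j ∈ Ico (0 : ℤ) N, f j = ∑ j ∈ range N, f j := by
  refine (sum_nbij ((↑) : ℕ → ℤ) ?_ (fun _ _ _ _ ↦ Nat.cast_inj.mp) ?_ fun _ _ ↦ rfl).symm
  · simp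
  · intro j hj
    simp only [coe_Ico, Set.mem_Ico] at hj
    lift j to ℕ using hj.1
    simpa using hj.2

theorem two_mul_sum_range_natCast_s16 {R : Type*} [CommRing R] (n : ℕ) :
    2 * ∑ i ∈ range n, (i : R) = n * (n - 1) := by
  induction n with
  | zero => simp
  | succ n ih => rw [sum_range_succ, mul_add, ih]; push_cast; ring

theorem six_mul_sum_range_natCast_sq {R : Type*} [CommRing R] (n : ℕ) :
    6 * ∑ i ∈ range n, (i : R) ^ 2 = n * (n - 1) * (2 * n - 1) := by
  induction n with
  | zero => simp
  | succ n ih => rw [sum_range_succ, mul_add, ih]; push_cast; ring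

variable {K : Type*} [Field K] [LinearOrder K] [IsStrictOrderedRing K] [FloorRing K]

theorem sum_range_mul_fract_div_mul_self {m : ℕ} (hm : 0 < m) (k : ℕ) :
    ∑ j ∈ range (k * m), Int.fract ((j : K) / m) * j
      = k * (m - 1) * (3 * k * m + m - 2) / 12 := by
  have hm' : (m : K) ≠ 0 := by positivity
  induction k with
  | zero => simp
  | succ k ih =>
    have block : ∀ i ∈ range m,
        Int.fract (((k * m + i : ℕ) : K) / m) * ((k * m + i : ℕ) : K) = k * i + i ^ 2 / m := by
      intro i hi
      rw [Int.fract_div_natCast_eq_div_natCast_mod, Nat.mul_add_mod_self_right,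
        Nat.mod_eq_of_lt (mem_range.mp hi)]
      push_cast
      field_simp
    rw [Nat.succ_mul, sum_range_add, ih, sum_congr rfl block, sum_add_distrib, ← mul_sum,
      ← sum_div]
    have sum_id : ∑ i ∈ range m, (i : K) = m * (m - 1) / 2 := by
      linear_combination two_mul_sum_range_natCast_s16 (R := K) m / 2
    have sum_sq : ∑ i ∈ range m, (i : K) ^ 2 = m * (m - 1) * (2 * m - 1) / 6 := by
      linear_combination six_mul_sum_range_natCast_sq (R := K) m / 6
    rw [sum_id, sum_sq]
    push_cast
    field_simp
    ring

theorem sum_fract_d_equiv_neg_G_general (n d : ℤ) (hn : 2 ≤ n) :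
    ∑ j ∈ Finset.Ico (0 : ℤ) n,
        Int.fract ((((Int.gcd n d : ℤ) * j : ℤ) : ℚ) / (n : ℚ)) * (j : ℚ)
      = ((n : ℚ) - (Int.gcd n d : ℚ))
          * (3 * (n : ℚ) + ((n / (Int.gcd n d : ℤ) : ℤ) : ℚ) - 2) / 12 := by
  obtain ⟨m, hnm⟩ : (Int.gcd n d : ℤ) ∣ n := Int.gcd_dvd_left n d
  have hG : 0 < Int.gcd n d := Int.gcd_pos_of_ne_zero_left d (by omega)
  generalize Int.gcd n d = G at *
  have hm : 0 < m := pos_of_mul_pos_right (show 0 < (G : ℤ) * m by omega) (by positivity)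
  lift m to ℕ using hm.le
  subst hnm
  have hG' : (G : ℚ) ≠ 0 := by positivity
  rw [Int.mul_ediv_cancel_left _ (by positivity), ← Nat.cast_mul, sum_Ico_zero_natCast]
  push_cast
  simp only [mul_div_mul_left _ _ hG']
  rw [sum_range_mul_fract_div_mul_self (by omega)]
  ring

/-- For `2 ≤ n < d`, `G = gcd(n,d)`, `d ≡ -G (mod n)`, `n' = n/G`:
`∑_{j=0}^{n-1} frac(Gj/n)·j = (n-G)(3n+n'-2)/12`. -/
theorem sum_fract_d_equiv_neg_G (n d : ℤ) (hn : 2 ≤ n) (hnd : n < d)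
    (hmod : d ≡ -(Int.gcd n d : ℤ) [ZMOD n]) :
    ∑ j ∈ Finset.Ico (0 : ℤ) n,
        Int.fract ((((Int.gcd n d : ℤ) * j : ℤ) : ℚ) / (n : ℚ)) * (j : ℚ)
      = ((n : ℚ) - (Int.gcd n d : ℚ))
          * (3 * (n : ℚ) + ((n / (Int.gcd n d : ℤ) : ℤ) : ℚ) - 2) / 12 :=
  sum_fract_d_equiv_neg_G_general n d hn
end

section
/- Let n' and d' be coprime positive integers and let m be an integer with m ≥ n'd' - n' - d'. Then the sum of all (n',d')-representable integers in [0,m] equals m(m+1)/2 - (n'-1)(d'-1)(2n'd'-n'-d'-1)/12, and the number of such representable integers equals m + 1 - (n'-1)(d'-1)/2. -/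
/-!
Every integer `x` is congruent mod `n'` to `d' * b` for a unique `0 ≤ b < n'`, and `x` is
representable iff `x ≥ d' * b`. So the non-representable naturals are exactly the numbers
`d' * b - n' * (a + 1)` with `b < n'` and `a < d' * b / n'`, all of them `≤ n'd' - n' - d' ≤ m`.
Column `b` contributes `q_b = d' * b / n'` numbers, whose count and sum are polynomials in `d' * b`
and `r_b = d' * b % n'`. As `b ↦ r_b` permutes `[0, n')`, the sums of `r_b` and `r_b ^ 2` over
`b < n'` are those of `b` and `b ^ 2`, and the power sums `∑ b`, `∑ b ^ 2` give the closed
forms.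
-/

open Finset

theorem sum_range_cast (n : ℕ) : ∑ b ∈ range n, (b : ℚ) = n * (n - 1) / 2 := by
  induction n with
  | zero => simp
  | succ k ih => rw [sum_range_succ, ih]; push_cast; ring

theorem sum_range_cast_sq (n : ℕ) :
    ∑ b ∈ range n, (b : ℚ) ^ 2 = n * (n - 1) * (2 * n - 1) / 6 := by
  induction n with
  | zero => simp
  | succ k ih => rw [sum_range_succ, ih]; push_cast; ring

theorem sum_Icc_zero_cast {m : ℤ} (hm : -1 ≤ m) :
    ∑ x ∈ Icc 0 m, (x : ℚ) = m * (m + 1) / 2 := by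
  induction m, hm using Int.leInduction with
  | base => simp
  | succ k hk ih =>
    rw [← insert_Icc_right_eq_Icc_add_one (by omega), sum_insert (by simp), ih]
    push_cast; ring

theorem card_Icc_zero_cast {m : ℤ} (hm : -1 ≤ m) : ((Icc 0 m).card : ℚ) = m + 1 := by
  rw [Int.card_Icc, sub_zero]
  exact_mod_cast Int.toNat_of_nonneg (by omega : 0 ≤ m + 1)

def IsRepresentable (n d : ℕ) (x : ℤ) : Prop := ∃ a b : ℕ, x = n * a + d * b

section
variable {n d : ℕ}

theorem exists_lt_dvd_sub_mul (hn : 0 < n) (hnd : n.Coprime d) (x : ℤ) :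
    ∃ b < n, (n : ℤ) ∣ x - d * b := by
  obtain ⟨u, v, huv⟩ : IsCoprime (n : ℤ) d := Nat.isCoprime_iff_coprime.mpr hnd
  have hn' : (0 : ℤ) < n := by exact_mod_cast hn
  refine ⟨(x * v % n).toNat, by have := Int.emod_lt_of_pos (x * v) hn'; omega, ?_⟩
  rw [Int.toNat_of_nonneg (Int.emod_nonneg _ hn'.ne'), Int.emod_def]
  exact ⟨x * u + d * (x * v / n), by linear_combination -x * huv⟩

theorem not_isRepresentable_iff (hn : 0 < n) (hnd : n.Coprime d) (x : ℤ) :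
    ¬IsRepresentable n d x ↔ ∃ b < n, ∃ a : ℕ, x = d * b - n * (a + 1) := by
  constructor
  · intro hx
    obtain ⟨b, hb, t, ht⟩ := exists_lt_dvd_sub_mul hn hnd x
    obtain htn | htn := le_or_gt 0 t
    · exact absurd ⟨t.toNat, b, by rw [Int.toNat_of_nonneg htn]; linarith⟩ hx
    · exact ⟨b, hb, (-t - 1).toNat, by rw [Int.toNat_of_nonneg (by omega)]; linarith⟩
  · rintro ⟨b, hb, a, rfl⟩ ⟨a', b', h⟩
    -- `d * (b - b') = n * (a + 1 + a') > 0`, but `n ∣ b - b' < n` forces `b - b' ≤ 0`.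
    obtain ⟨k, hk⟩ : (n : ℤ) ∣ (b - b' : ℤ) :=
      (Nat.isCoprime_iff_coprime.mpr hnd).dvd_of_dvd_mul_left ⟨a + 1 + a', by linarith⟩
    have hk0 : k ≤ 0 := by nlinarith
    have hdk : (d : ℤ) * k = a + 1 + a' :=
      mul_left_cancel₀ (by positivity : (n : ℤ) ≠ 0) (by linear_combination h - d * hk)
    nlinarith [Int.natCast_nonneg d]

def gaps (n d : ℕ) : Finset ℤ :=
  ((range n).sigma fun b => range (d * b / n)).image fun p => d * p.1 - n * (p.2 + 1)

theorem mem_gaps (hn : 0 < n) (hnd : n.Coprime d) {x : ℤ} :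
    x ∈ gaps n d ↔ 0 ≤ x ∧ ¬IsRepresentable n d x := by
  rw [not_isRepresentable_iff hn hnd]
  simp only [gaps, mem_image, mem_sigma, mem_range, Sigma.exists]
  constructor
  · rintro ⟨b, a, ⟨hb, hab⟩, rfl⟩
    have : ((a + 1) * n : ℕ) ≤ (d * b : ℤ) := by
      exact_mod_cast (Nat.le_div_iff_mul_le hn).1 hab
    exact ⟨by push_cast at this; linarith, b, hb, a, rfl⟩
  · rintro ⟨hx, b, hb, a, rfl⟩
    refine ⟨b, a, ⟨hb, (Nat.le_div_iff_mul_le hn).2 ?_⟩, rfl⟩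
    have : ((a + 1) * n : ℤ) ≤ d * b := by linarith
    exact_mod_cast this

theorem le_of_mem_gaps {x : ℤ} (hx : x ∈ gaps n d) : x ≤ n * d - n - d := by
  simp only [gaps, mem_image, mem_sigma, mem_range, Sigma.exists] at hx
  obtain ⟨b, a, ⟨hb, -⟩, rfl⟩ := hx
  have hb' : (b : ℤ) ≤ n - 1 := by omega
  nlinarith [Int.natCast_nonneg d, Int.natCast_nonneg a]

theorem filter_not_isRepresentable_Icc (hn : 0 < n) (hnd : n.Coprime d) {m : ℤ}
    (hm : (n : ℤ) * d - n - d ≤ m) [DecidablePred (IsRepresentable n d)] :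
    (Icc 0 m).filter (¬IsRepresentable n d ·) = gaps n d := by
  ext x
  rw [mem_filter, mem_Icc, mem_gaps hn hnd]
  refine ⟨fun ⟨⟨h0, _⟩, h⟩ => ⟨h0, h⟩, fun h => ⟨⟨h.1, ?_⟩, h.2⟩⟩
  exact (le_of_mem_gaps ((mem_gaps hn hnd).2 h)).trans hm

theorem sum_range_comp_mul_mod {M : Type*} [AddCommMonoid M] (hnd : n.Coprime d) (f : ℕ → M) :
    ∑ b ∈ range n, f (d * b % n) = ∑ b ∈ range n, f b := by
  have hmaps : Set.MapsTo (fun b => d * b % n) (range n) (range n) := fun b hb =>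
    mem_range.2 (Nat.mod_lt _ (Nat.zero_lt_of_lt (mem_range.1 hb)))
  have hinj : Set.InjOn (fun b => d * b % n) (range n) := fun b hb b' hb' h =>
    Nat.ModEq.eq_of_lt_of_lt (Nat.ModEq.cancel_left_of_coprime hnd h) (mem_range.1 hb)
      (mem_range.1 hb')
  exact sum_nbij _ hmaps hinj (surjOn_of_injOn_of_card_le _ hmaps hinj le_rfl) fun _ _ => rfl

theorem cast_div_eq_sub_mod_div (N : ℕ) (hn : n ≠ 0) :
    ((N / n : ℕ) : ℚ) = (N - (N % n : ℕ)) / n := by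
  rw [eq_div_iff (by positivity), eq_sub_iff_add_eq, mul_comm]
  exact_mod_cast Nat.div_add_mod N n

-- The right side has the shape `f N - f (N % n)`, `f t = t ^ 2 - n * t`, so that summing it over
-- `N = d * b` reduces to `sum_range_comp_mul_mod`.
theorem sum_range_div_sub_mul (N : ℕ) (hn : n ≠ 0) :
    ∑ a ∈ range (N / n), ((N : ℚ) - n * (a + 1))
      = ((N ^ 2 - n * N) - ((N % n : ℕ) ^ 2 - n * (N % n : ℕ))) / (2 * n) := by
  simp only [mul_add, mul_one, sub_add_eq_sub_sub, sum_sub_distrib, sum_const, card_range,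
    nsmul_eq_mul, ← mul_sum, sum_range_cast, cast_div_eq_sub_mod_div N hn]
  field_simp
  ring

theorem sum_gaps {M : Type*} [AddCommMonoid M] (hnd : n.Coprime d) (f : ℤ → M) :
    ∑ x ∈ gaps n d, f x
      = ∑ b ∈ range n, ∑ a ∈ range (d * b / n), f (d * b - n * (a + 1)) := by
  rw [gaps, sum_image, sum_sigma]
  rintro ⟨b, a⟩ hp ⟨b', a'⟩ hp' h
  simp only [coe_sigma, Set.mem_sigma_iff, coe_range, Set.mem_Iio] at hp hp' h
  have hdvd : (n : ℤ) ∣ b - b' :=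
    (Nat.isCoprime_iff_coprime.mpr hnd).dvd_of_dvd_mul_left ⟨a - a', by linear_combination h⟩
  obtain rfl : b = b' := by
    have := Int.eq_zero_of_abs_lt_dvd hdvd (abs_sub_lt_iff.2 ⟨by omega, by omega⟩)
    omega
  obtain rfl : a = a' := by
    have : (n : ℤ) * a = n * a' := by linarith
    exact_mod_cast mul_left_cancel₀ (by omega) this
  rfl

theorem sum_gaps_cast (hn : 0 < n) (hnd : n.Coprime d) :
    ∑ x ∈ gaps n d, (x : ℚ)
      = ((n : ℚ) - 1) * ((d : ℚ) - 1) * (2 * n * d - n - d - 1) / 12 := by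
  have hcol (b : ℕ) : ∑ a ∈ range (d * b / n), ((d * b : ℚ) - n * (a + 1))
      = (((d * b : ℚ) ^ 2 - n * (d * b))
          - (((d * b % n : ℕ) : ℚ) ^ 2 - n * (d * b % n : ℕ))) / (2 * n) := by
    have := sum_range_div_sub_mul (d * b) hn.ne'
    push_cast at this
    exact this
  rw [sum_gaps hnd]
  push_cast
  simp only [hcol]
  rw [← sum_div, sum_sub_distrib, sum_range_comp_mul_mod hnd (fun r => (r : ℚ) ^ 2 - n * r)]
  simp only [mul_pow, sum_sub_distrib, ← mul_sum, sum_range_cast, sum_range_cast_sq]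
  field_simp
  ring

theorem card_gaps (hn : 0 < n) (hnd : n.Coprime d) :
    ((gaps n d).card : ℚ) = ((n : ℚ) - 1) * ((d : ℚ) - 1) / 2 := by
  rw [card_eq_sum_ones, sum_gaps hnd]
  simp only [sum_const, card_range, smul_eq_mul, mul_one]
  push_cast
  simp only [cast_div_eq_sub_mod_div _ hn.ne', ← sum_div, sum_sub_distrib]
  rw [sum_range_comp_mul_mod hnd (fun r => (r : ℚ))]
  push_cast
  simp only [← mul_sum, sum_range_cast]
  field_simp
end

open scoped Classical in
/-- For coprime positive `n', d'` and `m ≥ n'd' - n' - d'`, the sum of the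
`(n',d')`-representable integers in `[0,m]` is
`m(m+1)/2 - (n'-1)(d'-1)(2n'd'-n'-d'-1)/12`, and their number is
`m + 1 - (n'-1)(d'-1)/2`. -/
theorem representable_sum_and_card (n' d' : ℕ) (hn' : 0 < n') (hd' : 0 < d')
    (hcop : Nat.gcd n' d' = 1) (m : ℤ) (hm : (n' : ℤ) * d' - n' - d' ≤ m) :
    ((∑ x ∈ (Finset.Icc (0 : ℤ) m).filter
        (fun x => ∃ a b : ℕ, x = (n' : ℤ) * a + (d' : ℤ) * b), x : ℤ) : ℚ)
        = (m : ℚ) * ((m : ℚ) + 1) / 2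
          - ((n' : ℚ) - 1) * ((d' : ℚ) - 1)
              * (2 * (n' : ℚ) * (d' : ℚ) - (n' : ℚ) - (d' : ℚ) - 1) / 12
    ∧ (((Finset.Icc (0 : ℤ) m).filter
        (fun x => ∃ a b : ℕ, x = (n' : ℤ) * a + (d' : ℤ) * b)).card : ℚ)
        = (m : ℚ) + 1 - ((n' : ℚ) - 1) * ((d' : ℚ) - 1) / 2 := by
  have hm1 : -1 ≤ m := by nlinarith
  have hgaps := filter_not_isRepresentable_Icc hn' hcop hm
  have hsum := sum_filter_add_sum_filter_not (Icc 0 m) (IsRepresentable n' d') (fun x => (x : ℚ))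
  have hcard := card_filter_add_card_filter_not (s := Icc 0 m) (p := IsRepresentable n' d')
  unfold IsRepresentable at hsum hcard hgaps
  rw [hgaps, sum_gaps_cast hn' hcop, sum_Icc_zero_cast hm1] at hsum
  rw [hgaps] at hcard
  replace hcard := congrArg (Nat.cast : ℕ → ℚ) hcard
  push_cast at hcard
  rw [card_gaps hn' hcop, card_Icc_zero_cast hm1] at hcard
  push_cast
  exact ⟨by linear_combination hsum, by linear_combination hcard⟩
end
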